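/- For the sequences c and s above, for all n ≥ 1 and p ≥ 0: det Σ_{3n}^{3p} = (−1)^n · (det Σ_n^p)² · det H_n^{p+1}, and det Σ_{3n+1}^{3p} = (−1)^{n+1} · J² · det H_{n+1}^p · det Σ_n^p · det Σ_n^{p+1}. -/

import Mathlib

/-!
Sorting the rows and columns of `Σ_N^{3p}` by residue modulo 3 cuts it into `3 × 3` blocks which,
because `s (3k) = (1 + J) c k`, `s (3k + 1) = J c k` and `s (3k + 2) = c (k + 1)`, are scalar
multiples of Hankel matrices of `c` at `p` and `p + 1`. Block row and column operations with
determinant one, using only `J² + J + 1 = 0`, make this block matrix block triangular: for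
`N = 3n` the diagonal blocks are `J Σ_n^p`, `-J Σ_n^p`, `J H_n^{p+1}`, and for `N = 3n + 1` they
are `(1 + J) H_{n+1}^p`, `Σ_n^p`, `J Σ_n^{p+1}`. Finally `1 + J = -J²` and `J³ = 1`.
-/

open Matrix

noncomputable def Hmat (u : ℕ → ℂ) (p n : ℕ) : Matrix (Fin n) (Fin n) ℂ :=
  Matrix.of fun i j => u (p + i + j)

namespace Matrix

variable {R : Type*}

section Partitioned

variable {l m n : Type*}

lemma fromRows_add_fromRows [Add R] (A₁ B₁ : Matrix l n R) (A₂ B₂ : Matrix m n R) :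
    fromRows A₁ A₂ + fromRows B₁ B₂ = fromRows (A₁ + B₁) (A₂ + B₂) := by
  ext (i | i) j <;> rfl

lemma fromCols_add_fromCols [Add R] (A₁ B₁ : Matrix l m R) (A₂ B₂ : Matrix l n R) :
    fromCols A₁ A₂ + fromCols B₁ B₂ = fromCols (A₁ + B₁) (A₂ + B₂) := by
  ext i (j | j) <;> rfl

lemma one_submatrix_id_mul [Fintype m] [DecidableEq m] [NonAssocSemiring R] (e : l → m)
    (M : Matrix m n R) : (1 : Matrix m m R).submatrix e id * M = M.submatrix e id := by
  simpa using one_submatrix_mul e (Equiv.refl m) M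

end Partitioned

def hankel (u : ℕ → R) (p : ℕ) {m n : ℕ} : Matrix (Fin m) (Fin n) R :=
  of fun i j => u (p + i + j)

variable {m n : ℕ}

lemma hankel_add [Add R] (u v : ℕ → R) (p : ℕ) :
    (hankel (u + v) p : Matrix (Fin m) (Fin n) R) = hankel u p + hankel v p := rfl

lemma hankel_smul {S : Type*} [SMul S R] (a : S) (u : ℕ → R) (p : ℕ) :
    (hankel (a • u) p : Matrix (Fin m) (Fin n) R) = a • hankel u p := rfl

lemma hankel_shift (u : ℕ → R) (p : ℕ) :
    (hankel (fun k => u (k + 1)) p : Matrix (Fin m) (Fin n) R) = hankel u (p + 1) := by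
  ext i j
  simp only [hankel, of_apply]
  ring_nf

lemma hankel_submatrix_castSucc (u : ℕ → R) (p : ℕ) :
    (hankel u p : Matrix (Fin (m + 1)) (Fin n) R).submatrix Fin.castSucc id = hankel u p := rfl

lemma hankel_submatrix_succ (u : ℕ → R) (p : ℕ) :
    (hankel u p : Matrix (Fin (m + 1)) (Fin n) R).submatrix Fin.succ id = hankel u (p + 1) := by
  ext i j
  simp only [hankel, submatrix_apply, of_apply, id, Fin.val_succ]
  ring_nf

lemma hankel_eq_add_hankel_succ [Add R] {c s : ℕ → R} (hs : ∀ k, s k = c k + c (k + 1)) (p : ℕ) :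
    (hankel s p : Matrix (Fin m) (Fin n) R) = hankel c p + hankel c (p + 1) := by
  rw [← hankel_shift, ← hankel_add]
  congr 1
  funext k
  exact hs k

def residueIndex (h₁ : n ≤ m) (h₂ : m ≤ n + 1) : Fin m ⊕ Fin n ⊕ Fin n → Fin (m + 2 * n) :=
  Sum.elim (fun a => ⟨3 * a, by omega⟩)
    (Sum.elim (fun a => ⟨3 * a + 1, by omega⟩) fun a => ⟨3 * a + 2, by omega⟩)

lemma residueIndex_bijective (h₁ : n ≤ m) (h₂ : m ≤ n + 1) :
    Function.Bijective (residueIndex h₁ h₂) := by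
  rw [Fintype.bijective_iff_injective_and_card]
  refine ⟨?_, by simp only [Fintype.card_sum, Fintype.card_fin]; omega⟩
  rintro (a | a | a) (b | b | b) h <;>
    simp only [residueIndex, Sum.elim_inl, Sum.elim_inr, Fin.ext_iff, Sum.inl.injEq, Sum.inr.injEq,
      reduceCtorEq] at h ⊢ <;> omega

lemma det_hankel_three_mul_eq_det_fromBlocks [CommRing R] (u : ℕ → R) (p : ℕ) (h₁ : n ≤ m)
    (h₂ : m ≤ n + 1) :
    (hankel u (3 * p) : Matrix (Fin (m + 2 * n)) (Fin (m + 2 * n)) R).det =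
      (fromBlocks (hankel (fun k => u (3 * k)) p)
        (fromCols (hankel (fun k => u (3 * k + 1)) p) (hankel (fun k => u (3 * k + 2)) p))
        (fromRows (hankel (fun k => u (3 * k + 1)) p) (hankel (fun k => u (3 * k + 2)) p))
        (fromBlocks (hankel (fun k => u (3 * k + 2)) p) (hankel (fun k => u (3 * k)) (p + 1))
          (hankel (fun k => u (3 * k)) (p + 1)) (hankel (fun k => u (3 * k + 1)) (p + 1))) :
        Matrix (Fin m ⊕ Fin n ⊕ Fin n) (Fin m ⊕ Fin n ⊕ Fin n) R).det := by
  rw [← det_submatrix_equiv_self (Equiv.ofBijective _ (residueIndex_bijective h₁ h₂))]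
  congr 1
  ext (a | a | a) (b | b | b) <;>
    simp only [hankel, residueIndex, Equiv.coe_ofBijective, submatrix_apply, Sum.elim_inl,
      Sum.elim_inr, of_apply, fromBlocks_apply₁₁, fromBlocks_apply₁₂, fromBlocks_apply₂₁,
      fromBlocks_apply₂₂, fromCols_apply_inl, fromCols_apply_inr, fromRows_apply_inl,
      fromRows_apply_inr] <;> ring_nf

section CubeRoot

variable [CommRing R] {ω : R}

lemma pow_three_mul_eq_one_of_sq_add_add_one_eq_zero (hω : ω ^ 2 + ω + 1 = 0) (k : ℕ) :
    ω ^ (3 * k) = 1 := by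
  rw [pow_mul, show ω ^ 3 = 1 by linear_combination (ω - 1) * hω, one_pow]

lemma det_fromBlocks_of_sq_add_add_one_eq_zero {ι : Type*} [Fintype ι] [DecidableEq ι]
    (hω : ω ^ 2 + ω + 1 = 0) (C D : Matrix ι ι R) :
    (fromBlocks ((1 + ω) • C) (fromCols (ω • C) D) (fromRows (ω • C) D)
      (fromBlocks D ((1 + ω) • D) ((1 + ω) • D) (ω • D))).det =
    (-1) ^ Fintype.card ι * (C + D).det ^ 2 * D.det := by
  set M := fromBlocks ((1 + ω) • C) (fromCols (ω • C) D) (fromRows (ω • C) D)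
    (fromBlocks D ((1 + ω) • D) ((1 + ω) • D) (ω • D))
  set S := C + D
  set M₁ := fromBlocks 0 (fromCols (ω • S) D) (fromRows (ω • S) 0)
    (fromBlocks 0 ((1 + ω) • D) 0 (ω • D))
  set M₂ := fromBlocks (ω • S) (fromCols (ω • S) ((2 + ω) • D)) (fromRows (ω • S) 0)
    (fromBlocks 0 ((1 + ω) • D) 0 (ω • D))
  set T := fromBlocks (ω • S) (fromCols (ω • S) ((2 + ω) • D)) 0
    (fromBlocks (-ω • S) (-D) 0 (ω • D))
  have hR : M * fromBlocks 1 0 (fromRows (ω • 1) 0) (fromBlocks 1 0 (ω • 1) 1) = M₁ := by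
    simp only [M, M₁, fromBlocks_multiply, fromCols_mul_fromRows, fromCols_mul_fromBlocks,
      fromBlocks_mul_fromRows, Matrix.mul_one, Matrix.mul_zero, Matrix.mul_smul, add_zero,
      zero_add, fromRows_add_fromRows]
    congr 2 <;> match_scalars <;> grind
  have hL₁ : fromBlocks 1 (fromCols 1 0) 0 1 * M₁ = M₂ := by
    simp only [M₁, M₂, fromBlocks_multiply, fromCols_mul_fromRows, fromCols_mul_fromBlocks,
      Matrix.one_mul, Matrix.mul_zero, Matrix.zero_mul, add_zero, zero_add, fromCols_add_fromCols]
    congr 2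
    module
  have hL₂ : fromBlocks 1 0 (fromRows (-1) 0) 1 * M₂ = T := by
    rw [fromBlocks_multiply, fromRows_mul_fromCols, fromRows_mul]
    simp only [T, Matrix.one_mul, Matrix.zero_mul, Matrix.neg_mul, add_zero, zero_add,
      fromRows_add_fromRows, neg_add_cancel, fromRows_zero, fromBlocks_add]
    congr 2 <;> module
  have hT : M.det = T.det := by
    rw [← hL₂, ← hL₁, ← hR]
    simp [det_fromBlocks_zero₁₂]
  have hscalar : ω ^ Fintype.card ι * ((-ω) ^ Fintype.card ι * ω ^ Fintype.card ι) =
      (-1) ^ Fintype.card ι := by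
    rw [neg_pow]
    linear_combination (-1) ^ Fintype.card ι *
      pow_three_mul_eq_one_of_sq_add_add_one_eq_zero hω (Fintype.card ι)
  rw [hT, det_fromBlocks_zero₂₁, det_fromBlocks_zero₂₁, det_smul, det_smul, det_smul, ← hscalar]
  ring

lemma det_fromBlocks_hankel_of_sq_add_add_one_eq_zero (hω : ω ^ 2 + ω + 1 = 0) (c : ℕ → R)
    (p n : ℕ) :
    (fromBlocks ((1 + ω) • hankel c p) (fromCols (ω • hankel c p) (hankel c (p + 1)))
      (fromRows (ω • hankel c p) (hankel c (p + 1)))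
      (fromBlocks (hankel c (p + 1)) ((1 + ω) • hankel c (p + 1)) ((1 + ω) • hankel c (p + 1))
        (ω • hankel c (p + 1))) :
      Matrix (Fin (n + 1) ⊕ Fin n ⊕ Fin n) (Fin (n + 1) ⊕ Fin n ⊕ Fin n) R).det =
    (-1) ^ (n + 1) * ω ^ 2 * (hankel c p : Matrix (Fin (n + 1)) (Fin (n + 1)) R).det *
      (hankel c p + hankel c (p + 1) : Matrix (Fin n) (Fin n) R).det *
      (hankel c (p + 1) + hankel c (p + 2) : Matrix (Fin n) (Fin n) R).det := by
  -- adds `ω²` times row `3i` to row `3i + 1` and `ω` times row `3i + 3` to row `3i + 2`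
  have hL : fromBlocks (1 : Matrix (Fin (n + 1)) (Fin (n + 1)) R) 0
        (fromRows (ω ^ 2 • (1 : Matrix (Fin (n + 1)) (Fin (n + 1)) R).submatrix Fin.castSucc id)
          (ω • (1 : Matrix (Fin (n + 1)) (Fin (n + 1)) R).submatrix Fin.succ id))
        (1 : Matrix (Fin n ⊕ Fin n) (Fin n ⊕ Fin n) R) *
      fromBlocks ((1 + ω) • hankel c p) (fromCols (ω • hankel c p) (hankel c (p + 1)))
        (fromRows (ω • hankel c p) (hankel c (p + 1)))
        (fromBlocks (hankel c (p + 1)) ((1 + ω) • hankel c (p + 1)) ((1 + ω) • hankel c (p + 1))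
          (ω • hankel c (p + 1))) =
      fromBlocks ((1 + ω) • hankel c p) (fromCols (ω • hankel c p) (hankel c (p + 1))) 0
        (fromBlocks (hankel c p + hankel c (p + 1)) 0 0
          (ω • (hankel c (p + 1) + hankel c (p + 2)))) := by
    rw [fromBlocks_multiply, fromRows_mul, fromRows_mul_fromCols]
    simp only [Matrix.one_mul, Matrix.zero_mul, add_zero, Matrix.smul_mul, Matrix.mul_smul,
      one_submatrix_id_mul, hankel_submatrix_castSucc, hankel_submatrix_succ,
      fromRows_add_fromRows, fromBlocks_add, ← fromRows_zero]
    congr 2 <;> match_scalars <;> grind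
  have hscalar : (1 + ω) ^ (n + 1) * ω ^ n = (-1) ^ (n + 1) * ω ^ 2 := by
    rw [show 1 + ω = -ω ^ 2 by linear_combination hω, neg_pow]
    linear_combination (-1) ^ (n + 1) * ω ^ 2 * pow_three_mul_eq_one_of_sq_add_add_one_eq_zero hω n
  replace hL := congrArg det hL
  rw [det_mul, det_fromBlocks_zero₁₂, det_one, det_one, one_mul, one_mul] at hL
  rw [hL, det_fromBlocks_zero₂₁, det_fromBlocks_zero₂₁, det_smul, det_smul, Fintype.card_fin,
    Fintype.card_fin, ← hscalar]
  ring

end CubeRoot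

end Matrix

section Trisection

open Matrix

variable {R : Type*} [CommRing R] {ω : R} {c s : ℕ → R}

lemma comp_three_mul_eq (hs : ∀ k, s k = c k + c (k + 1)) (hc₀ : ∀ k, c (3 * k) = c k)
    (hc₁ : ∀ k, c (3 * k + 1) = ω * c k) : (fun k => s (3 * k)) = (1 + ω) • c := by
  funext k
  simp only [hs, hc₀, hc₁, Pi.smul_apply, smul_eq_mul]
  ring

lemma comp_three_mul_add_one_eq (hs : ∀ k, s k = c k + c (k + 1))
    (hc₁ : ∀ k, c (3 * k + 1) = ω * c k) (hc₂ : ∀ k, c (3 * k + 2) = 0) :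
    (fun k => s (3 * k + 1)) = ω • c := by
  funext k
  rw [hs, hc₁, hc₂, add_zero, Pi.smul_apply, smul_eq_mul]

lemma comp_three_mul_add_two_eq (hs : ∀ k, s k = c k + c (k + 1))
    (hc₀ : ∀ k, c (3 * k) = c k) (hc₂ : ∀ k, c (3 * k + 2) = 0) :
    (fun k => s (3 * k + 2)) = fun k => c (k + 1) := by
  funext k
  rw [hs, hc₂, zero_add, show 3 * k + 2 + 1 = 3 * (k + 1) by ring, hc₀]

theorem det_hankel_three_mul (hω : ω ^ 2 + ω + 1 = 0) (hs : ∀ k, s k = c k + c (k + 1))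
    (hc₀ : ∀ k, c (3 * k) = c k) (hc₁ : ∀ k, c (3 * k + 1) = ω * c k)
    (hc₂ : ∀ k, c (3 * k + 2) = 0) (n p : ℕ) :
    (hankel s (3 * p) : Matrix (Fin (3 * n)) (Fin (3 * n)) R).det =
      (-1) ^ n * (hankel s p : Matrix (Fin n) (Fin n) R).det ^ 2 *
        (hankel c (p + 1) : Matrix (Fin n) (Fin n) R).det := by
  rw [show 3 * n = n + 2 * n by ring, det_hankel_three_mul_eq_det_fromBlocks s p le_rfl (by omega),
    comp_three_mul_eq hs hc₀ hc₁, comp_three_mul_add_one_eq hs hc₁ hc₂,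
    comp_three_mul_add_two_eq hs hc₀ hc₂]
  simp only [hankel_smul, hankel_shift]
  rw [det_fromBlocks_of_sq_add_add_one_eq_zero hω, hankel_eq_add_hankel_succ hs, Fintype.card_fin]

theorem det_hankel_three_mul_add_one (hω : ω ^ 2 + ω + 1 = 0)
    (hs : ∀ k, s k = c k + c (k + 1)) (hc₀ : ∀ k, c (3 * k) = c k)
    (hc₁ : ∀ k, c (3 * k + 1) = ω * c k) (hc₂ : ∀ k, c (3 * k + 2) = 0) (n p : ℕ) :
    (hankel s (3 * p) : Matrix (Fin (3 * n + 1)) (Fin (3 * n + 1)) R).det =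
      (-1) ^ (n + 1) * ω ^ 2 * (hankel c p : Matrix (Fin (n + 1)) (Fin (n + 1)) R).det *
        (hankel s p : Matrix (Fin n) (Fin n) R).det *
        (hankel s (p + 1) : Matrix (Fin n) (Fin n) R).det := by
  rw [show 3 * n + 1 = (n + 1) + 2 * n by ring,
    det_hankel_three_mul_eq_det_fromBlocks s p (by omega) le_rfl,
    comp_three_mul_eq hs hc₀ hc₁, comp_three_mul_add_one_eq hs hc₁ hc₂,
    comp_three_mul_add_two_eq hs hc₀ hc₂]
  simp only [hankel_smul, hankel_shift]
  rw [det_fromBlocks_hankel_of_sq_add_add_one_eq_zero hω, hankel_eq_add_hankel_succ hs,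
    hankel_eq_add_hankel_succ hs]

end Trisection

theorem stmt12_general (J : ℂ) (hJ : J = (Complex.I * Real.sqrt 3 - 1) / 2)
    (c : ℕ → ℂ)
    (hc3 : ∀ n, c (3 * n) = c n)
    (hc31 : ∀ n, c (3 * n + 1) = J * c n)
    (hc32 : ∀ n, c (3 * n + 2) = 0)
    (s : ℕ → ℂ) (hs : ∀ n, s n = c n + c (n + 1)) :
    ∀ n p : ℕ, 1 ≤ n →
      (Hmat s (3 * p) (3 * n)).det =
        (-1) ^ n * (Hmat s p n).det ^ 2 * (Hmat c (p + 1) n).det ∧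
      (Hmat s (3 * p) (3 * n + 1)).det =
        (-1) ^ (n + 1) * J ^ 2 * (Hmat c p (n + 1)).det * (Hmat s p n).det *
          (Hmat s (p + 1) n).det := by
  have hJ2 : J ^ 2 + J + 1 = 0 := by
    have h3 : ((Real.sqrt 3 : ℝ) : ℂ) ^ 2 = 3 := by
      exact_mod_cast Real.sq_sqrt (by norm_num : (0 : ℝ) ≤ 3)
    rw [hJ]
    linear_combination ((Real.sqrt 3 : ℝ) : ℂ) ^ 2 / 4 * Complex.I_sq - 1 / 4 * h3
  intro n p _
  exact ⟨det_hankel_three_mul hJ2 hs hc3 hc31 hc32 n p,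
    det_hankel_three_mul_add_one hJ2 hs hc3 hc31 hc32 n p⟩

theorem stmt12 (J : ℂ) (hJ : J = (Complex.I * Real.sqrt 3 - 1) / 2)
    (c : ℕ → ℂ) (hc0 : c 0 = 1)
    (hc3 : ∀ n, c (3 * n) = c n)
    (hc31 : ∀ n, c (3 * n + 1) = J * c n)
    (hc32 : ∀ n, c (3 * n + 2) = 0)
    (s : ℕ → ℂ) (hs : ∀ n, s n = c n + c (n + 1)) :
    ∀ n p : ℕ, 1 ≤ n →
      (Hmat s (3 * p) (3 * n)).det =
        (-1) ^ n * (Hmat s p n).det ^ 2 * (Hmat c (p + 1) n).det ∧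
      (Hmat s (3 * p) (3 * n + 1)).det =
        (-1) ^ (n + 1) * J ^ 2 * (Hmat c p (n + 1)).det * (Hmat s p n).det *
          (Hmat s (p + 1) n).det :=
  stmt12_general J hJ c hc3 hc31 hc32 s hs
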